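/- arXiv:2412.09786 — 4 statements merged into one kernel-verified Lean document; each statement's English description precedes it below -/
import Mathlib

section
/- Let T and C be independent random variables with values in (0, ∞), set Y = min(T, C) and Δ = 1{T ≤ C}, let μ_T denote the law of T, and define μ₁(B) = P(Y ∈ B, Δ = 1) for Borel B ⊆ (0, ∞). Let R(u) = P(Y ≥ u) and S̄(u) = P(T ≥ u). Fix t > 0 with P(Y ≥ t) > 0. Then ∫_{(0,t]} R(u)^{-1} dμ₁(u) = ∫_{(0,t]} S̄(u)^{-1} dμ_T(u). In words: on (0, t], the observed-data cumulative hazard, built from the subdistribution of uncensored failures and the at-risk probability of the observed time, coincides with the cumulative hazard of the true event time T. -/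
open MeasureTheory ProbabilityTheory

/-- For independent positive `T` (event time) and `C` (censoring time), with
`Y = min(T,C)`, `Δ = 1{T ≤ C}`, subdistribution measure `μ₁(B) = P(Y ∈ B, Δ = 1)`,
at-risk probability `R(u) = P(Y ≥ u)` and `S̄(u) = P(T ≥ u)`: if `t > 0` and
`P(Y ≥ t) > 0`, then the observed-data cumulative hazard on `(0, t]` coincides
with the cumulative hazard of `T`:
`∫_{(0,t]} R(u)⁻¹ dμ₁(u) = ∫_{(0,t]} S̄(u)⁻¹ dμ_T(u)`. -/
theorem stmt_2 {Ω : Type*} [MeasurableSpace Ω] (μ : Measure Ω) [IsProbabilityMeasure μ]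
    (T C : Ω → ℝ) (hT : Measurable T) (hC : Measurable C)
    (hTpos : ∀ ω, 0 < T ω) (hCpos : ∀ ω, 0 < C ω)
    (hInd : IndepFun T C μ)
    (t : ℝ) (ht : 0 < t)
    (hY : 0 < μ {ω | t ≤ min (T ω) (C ω)}) :
    ∫⁻ u in Set.Ioc (0 : ℝ) t, (μ {ω | u ≤ min (T ω) (C ω)})⁻¹
        ∂((μ.restrict {ω | T ω ≤ C ω}).map (fun ω => min (T ω) (C ω)))
      = ∫⁻ u in Set.Ioc (0 : ℝ) t, (μ {ω | u ≤ T ω})⁻¹ ∂(μ.map T) := by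
  set S : ℝ → ENNReal := fun u => μ {ω | u ≤ T ω} with hSdef
  set G : ℝ → ENNReal := fun u => μ {ω | u ≤ C ω} with hGdef
  have hSanti : Antitone S := fun a b hab =>
    measure_mono (fun ω h => le_trans hab h)
  have hGanti : Antitone G := fun a b hab =>
    measure_mono (fun ω h => le_trans hab h)
  have hSm : Measurable S := hSanti.measurable
  have hGm : Measurable G := hGanti.measurable
  have hR : ∀ u, μ {ω | u ≤ min (T ω) (C ω)} = S u * G u := by
    intro u
    have hset : {ω | u ≤ min (T ω) (C ω)} = T ⁻¹' Set.Ici u ∩ C ⁻¹' Set.Ici u := by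
      ext ω; simp [le_min_iff, Set.mem_inter_iff, and_comm]
    rw [hset, hInd.measure_inter_preimage_eq_mul _ _ measurableSet_Ici measurableSet_Ici]
    rfl
  have hGpos : ∀ u ∈ Set.Ioc (0:ℝ) t, 0 < G u := by
    intro u hu
    refine lt_of_lt_of_le hY (measure_mono fun ω h => ?_)
    exact le_trans hu.2 (le_trans h (min_le_right _ _))
  have hGne : ∀ u, G u ≠ ⊤ := fun u => measure_ne_top _ _
  -- the indicator integrand
  set f : ℝ → ENNReal := (Set.Ioc (0:ℝ) t).indicator (fun u => (S u * G u)⁻¹) with hfdef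
  have hfm : Measurable f :=
    ((hSm.mul hGm).inv).indicator measurableSet_Ioc
  have hYm : Measurable (fun ω => min (T ω) (C ω)) := hT.min hC
  have hA : MeasurableSet {ω | T ω ≤ C ω} := measurableSet_le hT hC
  have hmap : μ.map (fun ω => (T ω, C ω)) = (μ.map T).prod (μ.map C) :=
    (indepFun_iff_map_prod_eq_prod_map_map hT.aemeasurable hC.aemeasurable).mp hInd
  -- Step 1: LHS as lintegral of f over restricted measure
  have step1 : ∫⁻ u in Set.Ioc (0 : ℝ) t, (μ {ω | u ≤ min (T ω) (C ω)})⁻¹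
        ∂((μ.restrict {ω | T ω ≤ C ω}).map (fun ω => min (T ω) (C ω)))
      = ∫⁻ ω in {ω | T ω ≤ C ω}, f (T ω) ∂μ := by
    simp only [hR]
    rw [← lintegral_indicator measurableSet_Ioc _, ← hfdef,
      lintegral_map hfm hYm]
    refine setLIntegral_congr_fun hA (fun ω hω => ?_)
    rw [min_eq_left hω]
  -- Step 2: move to the product measure
  have step2 : ∫⁻ ω in {ω | T ω ≤ C ω}, f (T ω) ∂μ
      = ∫⁻ u, f u * G u ∂(μ.map T) := by
    set F : ℝ × ℝ → ENNReal := fun p => {p : ℝ × ℝ | p.1 ≤ p.2}.indicator (fun p => f p.1) p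
      with hFdef
    have hFm : Measurable F :=
      (hfm.comp measurable_fst).indicator (measurableSet_le measurable_fst measurable_snd)
    have h1 : ∫⁻ ω in {ω | T ω ≤ C ω}, f (T ω) ∂μ = ∫⁻ ω, F (T ω, C ω) ∂μ := by
      rw [← lintegral_indicator hA _]
      refine lintegral_congr fun ω => ?_
      by_cases h : T ω ≤ C ω <;> simp [hFdef, Set.indicator, h]
    rw [h1, ← lintegral_map hFm (hT.prodMk hC), hmap, lintegral_prod _ hFm.aemeasurable]
    refine lintegral_congr fun u => ?_
    have h2 : ∀ c : ℝ, F (u, c) = (Set.Ici u).indicator (fun _ => f u) c := by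
      intro c
      by_cases h : u ≤ c <;> simp [hFdef, Set.indicator, h]
    simp only [h2]
    rw [lintegral_indicator measurableSet_Ici _, setLIntegral_const,
      Measure.map_apply hC measurableSet_Ici]
    rfl
  rw [step1, step2]
  -- Step 3: compute the integrand
  have h3 : ∀ u, f u * G u
      = (Set.Ioc (0:ℝ) t).indicator (fun u => (S u * G u)⁻¹ * G u) u := by
    intro u
    by_cases h : u ∈ Set.Ioc (0:ℝ) t <;> simp [hfdef, Set.indicator, h]
  simp only [h3]
  rw [lintegral_indicator measurableSet_Ioc _]
  refine setLIntegral_congr_fun measurableSet_Ioc (fun u hu => ?_)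
  have hG0 : G u ≠ 0 := (hGpos u hu).ne'
  rw [ENNReal.mul_inv (Or.inr (hGne u)) (Or.inr hG0), mul_assoc,
    ENNReal.inv_mul_cancel hG0 (hGne u), mul_one]
end

section
/- Let (Ω, ℱ, P) be a probability space and 𝒢 ⊆ ℱ a sub-σ-algebra. Let Z, Z̃, B be random variables with values in {0, 1} such that: (i) consistency holds, i.e., B·Z = B·Z̃ almost surely; (ii) Z and B are conditionally independent given 𝒢; (iii) a version π of the conditional expectation E[B | 𝒢] satisfies π > 0 almost surely. Then E[Z] = E[B·Z̃ / π]. In words: under consistency, conditional ignorability, and positivity, the counterfactual probability E[Z] = P(T(a) > t) equals the inverse-probability-weighted mean of the observed outcome indicator among subjects with exposure level a. -/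
open MeasureTheory ProbabilityTheory Filter Topology

/-- Under consistency (`B·Z = B·Z̃` a.s.), conditional ignorability (`Z ⫫ B | 𝒢`),
and positivity (`π = E[B | 𝒢] > 0` a.s.), the counterfactual probability `E[Z]`
equals the inverse-probability-weighted mean `E[B·Z̃ / π]`. -/
theorem stmt_3 {Ω : Type*} (m : MeasurableSpace Ω) {mΩ : MeasurableSpace Ω} [StandardBorelSpace Ω] [Nonempty Ω]
    (μ : Measure Ω) [IsProbabilityMeasure μ]
    (hm : m ≤ mΩ)
    (Z Zt B : Ω → ℝ) (hZ : Measurable Z) (hZt : Measurable Zt) (hB : Measurable B)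
    (hZ01 : ∀ ω, Z ω = 0 ∨ Z ω = 1)
    (hZt01 : ∀ ω, Zt ω = 0 ∨ Zt ω = 1)
    (hB01 : ∀ ω, B ω = 0 ∨ B ω = 1)
    (hcons : (fun ω => B ω * Z ω) =ᵐ[μ] fun ω => B ω * Zt ω)
    (hCI : CondIndepFun m hm Z B μ)
    (π : Ω → ℝ) (hπmeas : StronglyMeasurable[m] π)
    (hπ : π =ᵐ[μ] μ[B | m])
    (hπpos : ∀ᵐ ω ∂μ, 0 < π ω) :
    ∫ ω, Z ω ∂μ = ∫ ω, B ω * Zt ω / π ω ∂μ := by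
  -- notation
  have hZ' : Measurable[mΩ] Z := hZ
  have hB' : Measurable[mΩ] B := hB
  set G : Ω → ℝ := fun ω => B ω * Z ω with hGdef
  have hGmeas : Measurable[mΩ] G := hB'.mul hZ'
  have hG01 : ∀ ω, 0 ≤ G ω ∧ G ω ≤ 1 := by
    intro ω
    rcases hB01 ω with h1 | h1 <;> rcases hZ01 ω with h2 | h2 <;>
      simp [hGdef, h1, h2]
  have hGint : Integrable G μ := by
    refine ⟨hGmeas.aestronglyMeasurable, ?_⟩
    refine HasFiniteIntegral.of_bounded (C := 1) (ae_of_all _ fun ω => ?_)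
    rw [Real.norm_eq_abs, abs_le]
    exact ⟨by linarith [(hG01 ω).1], (hG01 ω).2⟩
  have hZint : Integrable Z μ := by
    refine ⟨hZ'.aestronglyMeasurable, ?_⟩
    refine HasFiniteIntegral.of_bounded (C := 1) (ae_of_all _ fun ω => ?_)
    rcases hZ01 ω with h | h <;> simp [h]
  -- Step B: key factorization μ[G|m] =ᵐ μ[Z|m] * π
  set F : Ω → ℝ := fun ω => (μ[Z|m]) ω with hFdef
  have hπm : Measurable[mΩ] π := (hπmeas.mono hm).measurable
  have key : μ[G|m] =ᵐ[μ] fun ω => F ω * π ω := by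
    have h1 := (condIndepFun_iff_condExp_inter_preimage_eq_mul (hm' := hm)
      (μ := μ) hZ' hB').mp hCI {1} {1} (measurableSet_singleton 1) (measurableSet_singleton 1)
    have eG : (Z ⁻¹' {1} ∩ B ⁻¹' {1}).indicator (fun _ => (1 : ℝ)) = G := by
      ext ω
      rcases hZ01 ω with h2 | h2 <;> rcases hB01 ω with h3 | h3 <;>
        simp [Set.indicator_apply, Set.mem_preimage, h2, h3, hGdef]
    have eZ : (Z ⁻¹' {1}).indicator (fun _ => (1 : ℝ)) = Z := by
      ext ω; rcases hZ01 ω with h2 | h2 <;>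
        simp [Set.indicator_apply, Set.mem_preimage, h2]
    have eB : (B ⁻¹' {1}).indicator (fun _ => (1 : ℝ)) = B := by
      ext ω; rcases hB01 ω with h2 | h2 <;>
        simp [Set.indicator_apply, Set.mem_preimage, h2]
    rw [eG, eZ, eB] at h1
    filter_upwards [h1, hπ] with ω hω hπω
    rw [hω, hπω]
  -- F is between 0 and 1 a.e.
  have hF_nonneg : 0 ≤ᵐ[μ] F :=
    condExp_nonneg (ae_of_all _ fun ω => by rcases hZ01 ω with h | h <;> simp [h])
  have hF_le_one : F ≤ᵐ[μ] fun _ => (1 : ℝ) := by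
    have h1 : Z ≤ᵐ[μ] fun _ => (1 : ℝ) :=
      ae_of_all _ fun ω => by rcases hZ01 ω with h | h <;> simp [h]
    have h2 := condExp_mono (m := m) hZint (integrable_const (1 : ℝ)) h1
    rw [condExp_const hm] at h2
    exact h2
  have hFint : Integrable F μ := integrable_condExp
  -- truncations
  set f : ℕ → Ω → ℝ := fun n ω => min ((π ω)⁻¹) n * G ω with hfdef
  set Φ : ℕ → Ω → ℝ := fun n ω => min ((π ω)⁻¹) n * (F ω * π ω) with hΦdef
  set H : Ω → ℝ := fun ω => (π ω)⁻¹ * G ω with hHdef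
  have hmin_sm : ∀ n : ℕ, StronglyMeasurable[m] (fun ω => min ((π ω)⁻¹) (n : ℝ)) := fun n =>
    (hπmeas.measurable.inv.min measurable_const).stronglyMeasurable
  have hmin_bd : ∀ n : ℕ, ∀ᵐ ω ∂μ, ‖min ((π ω)⁻¹) (n : ℝ)‖ ≤ (n : ℝ) := by
    intro n
    filter_upwards [hπpos] with ω hω
    rw [Real.norm_eq_abs, abs_le]
    constructor
    · have : (0 : ℝ) ≤ min ((π ω)⁻¹) n := le_min (inv_nonneg.2 hω.le) (Nat.cast_nonneg n)
      linarith
    · exact min_le_right _ _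
  have hfint : ∀ n, Integrable (f n) μ := by
    intro n
    refine ⟨((hπm.inv.min measurable_const).mul hGmeas).aestronglyMeasurable, ?_⟩
    refine HasFiniteIntegral.of_bounded (C := (n : ℝ)) ?_
    filter_upwards [hmin_bd n] with ω hω
    calc ‖f n ω‖ = ‖min ((π ω)⁻¹) (n : ℝ)‖ * ‖G ω‖ := norm_mul _ _
    _ ≤ (n : ℝ) * 1 := by
        refine mul_le_mul hω ?_ (norm_nonneg _) (Nat.cast_nonneg n)
        rw [Real.norm_eq_abs, abs_le]; exact ⟨by linarith [(hG01 ω).1], (hG01 ω).2⟩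
    _ = n := mul_one _
  have hΦ_le_one : ∀ n, ∀ᵐ ω ∂μ, 0 ≤ Φ n ω ∧ Φ n ω ≤ F ω := by
    intro n
    filter_upwards [hπpos, hF_nonneg] with ω hω hFω
    have hmin0 : (0 : ℝ) ≤ min ((π ω)⁻¹) n := le_min (inv_nonneg.2 hω.le) (Nat.cast_nonneg n)
    constructor
    · exact mul_nonneg hmin0 (mul_nonneg hFω hω.le)
    · have h1 : min ((π ω)⁻¹) n * π ω ≤ 1 := by
        calc min ((π ω)⁻¹) n * π ω ≤ (π ω)⁻¹ * π ω :=
          mul_le_mul_of_nonneg_right (min_le_left _ _) hω.le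
        _ = 1 := inv_mul_cancel₀ hω.ne'
      calc Φ n ω = min ((π ω)⁻¹) n * π ω * F ω := by ring
      _ ≤ 1 * F ω := mul_le_mul_of_nonneg_right h1 hFω
      _ = F ω := one_mul _
  have hΦint : ∀ n, Integrable (Φ n) μ := by
    intro n
    refine ⟨((hπm.inv.min measurable_const).mul
      ((stronglyMeasurable_condExp.mono hm).measurable.mul hπm)).aestronglyMeasurable, ?_⟩
    refine HasFiniteIntegral.of_bounded (C := (1 : ℝ)) ?_
    filter_upwards [hΦ_le_one n, hF_le_one] with ω ⟨h0, h1⟩ h2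
    rw [Real.norm_eq_abs, abs_le]
    exact ⟨by linarith, by calc Φ n ω ≤ F ω := h1
                            _ ≤ 1 := h2⟩
  -- ∫ f n = ∫ Φ n
  have hstep : ∀ n, ∫ ω, f n ω ∂μ = ∫ ω, Φ n ω ∂μ := by
    intro n
    have hpull := condExp_stronglyMeasurable_mul_of_bound hm (hmin_sm n) hGint (n : ℝ)
      (hmin_bd n)
    calc ∫ ω, f n ω ∂μ
        = ∫ ω, (μ[(fun ω => min ((π ω)⁻¹) (n : ℝ)) * G|m]) ω ∂μ := by
          rw [integral_condExp hm]; rfl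
      _ = ∫ ω, Φ n ω ∂μ := by
          refine integral_congr_ae ?_
          filter_upwards [hpull, key] with ω h1 h2
          simp only [Pi.mul_apply] at h1
          rw [h1, h2]
  -- ∫ Φ n → ∫ F
  have hΦ_tendsto : Tendsto (fun n => ∫ ω, Φ n ω ∂μ) atTop (𝓝 (∫ ω, F ω ∂μ)) := by
    refine integral_tendsto_of_tendsto_of_monotone hΦint hFint ?_ ?_
    · filter_upwards [hπpos, hF_nonneg] with ω hω hF a b hab
      refine mul_le_mul_of_nonneg_right (min_le_min le_rfl ?_) (mul_nonneg hF hω.le)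
      exact_mod_cast hab
    · filter_upwards [hπpos, hF_nonneg] with ω hω hF
      obtain ⟨N, hN⟩ := exists_nat_ge ((π ω)⁻¹)
      refine Tendsto.congr' ?_ (tendsto_const_nhds (x := F ω))
      filter_upwards [eventually_ge_atTop N] with n hn
      have : min ((π ω)⁻¹) (n : ℝ) = (π ω)⁻¹ :=
        min_eq_left (hN.trans (Nat.cast_le.2 hn))
      simp only [hΦdef, this]
      field_simp
  -- a.e. sup identity, integrability of H
  have hf_mono : ∀ᵐ ω ∂μ, Monotone fun n => f n ω := by
    filter_upwards [hπpos] with ω hω a b hab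
    refine mul_le_mul_of_nonneg_right (min_le_min le_rfl ?_) (hG01 ω).1
    exact_mod_cast hab
  have hf_tendsto : ∀ᵐ ω ∂μ, Tendsto (fun n => f n ω) atTop (𝓝 (H ω)) := by
    filter_upwards [hπpos] with ω hω
    obtain ⟨N, hN⟩ := exists_nat_ge ((π ω)⁻¹)
    refine Tendsto.congr' ?_ (tendsto_const_nhds (x := H ω))
    filter_upwards [eventually_ge_atTop N] with n hn
    have : min ((π ω)⁻¹) (n : ℝ) = (π ω)⁻¹ := min_eq_left (hN.trans (Nat.cast_le.2 hn))
    simp only [hfdef, hHdef, this]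
  have hf_nonneg : ∀ n, 0 ≤ᵐ[μ] f n := by
    intro n
    filter_upwards [hπpos] with ω hω
    exact mul_nonneg (le_min (inv_nonneg.2 hω.le) (Nat.cast_nonneg n)) (hG01 ω).1
  have hf_int_le : ∀ n, ∫ ω, f n ω ∂μ ≤ 1 := by
    intro n
    rw [hstep n]
    calc ∫ ω, Φ n ω ∂μ ≤ ∫ _ω, (1 : ℝ) ∂μ := by
          refine integral_mono_ae (hΦint n) (integrable_const 1) ?_
          filter_upwards [hΦ_le_one n, hF_le_one] with ω ⟨_, h1⟩ h2
          exact h1.trans h2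
    _ = 1 := by simp
  have hHmeas : AEStronglyMeasurable[mΩ] H μ :=
    (hπm.inv.mul hGmeas).aestronglyMeasurable
  have hH_nonneg : 0 ≤ᵐ[μ] H := by
    filter_upwards [hπpos] with ω hω
    exact mul_nonneg (inv_nonneg.2 hω.le) (hG01 ω).1
  have hHint : Integrable H μ := by
    refine ⟨hHmeas, ?_⟩
    rw [hasFiniteIntegral_iff_ofReal hH_nonneg]
    have hsup : ∫⁻ ω, ENNReal.ofReal (H ω) ∂μ = ⨆ n, ∫⁻ ω, ENNReal.ofReal (f n ω) ∂μ := by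
      rw [← lintegral_iSup' (μ := μ) (fun n =>
        (show Measurable[mΩ] (f n) from (hπm.inv.min measurable_const).mul hGmeas).ennreal_ofReal.aemeasurable) (by
          filter_upwards [hf_mono] with ω hω a b hab
          exact ENNReal.ofReal_le_ofReal (hω hab))]
      refine lintegral_congr_ae ?_
      filter_upwards [hπpos] with ω hω
      refine le_antisymm ?_ ?_
      · obtain ⟨N, hN⟩ := exists_nat_ge ((π ω)⁻¹)
        refine le_iSup_of_le N (le_of_eq ?_)
        congr 1
        simp only [hHdef, hfdef, min_eq_left hN]
      · refine iSup_le fun n => ENNReal.ofReal_le_ofReal ?_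
        exact mul_le_mul_of_nonneg_right (min_le_left _ _) (hG01 ω).1
    rw [hsup]
    refine lt_of_le_of_lt (iSup_le fun n => ?_) (lt_of_le_of_lt le_rfl
      (show ENNReal.ofReal 1 < ⊤ from ENNReal.ofReal_lt_top))
    rw [← ofReal_integral_eq_lintegral_ofReal (hfint n) (hf_nonneg n)]
    exact ENNReal.ofReal_le_ofReal (hf_int_le n)
  -- ∫ f n → ∫ H
  have hf_tend_int : Tendsto (fun n => ∫ ω, f n ω ∂μ) atTop (𝓝 (∫ ω, H ω ∂μ)) :=
    integral_tendsto_of_tendsto_of_monotone hfint hHint hf_mono hf_tendsto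
  have hFH : ∫ ω, H ω ∂μ = ∫ ω, F ω ∂μ := by
    refine tendsto_nhds_unique hf_tend_int ?_
    simpa only [hstep] using hΦ_tendsto
  -- conclude
  have hZF : ∫ ω, Z ω ∂μ = ∫ ω, F ω ∂μ := (integral_condExp hm).symm
  rw [hZF, ← hFH]
  refine Eq.symm (integral_congr_ae ?_)
  filter_upwards [hcons] with ω hω
  rw [hHdef]
  simp only [hGdef]
  rw [← hω, div_eq_mul_inv, mul_comm]
end

section
/- Let (Ω, ℱ, P) be a probability space and 𝒢 ⊆ ℱ a sub-σ-algebra. Let Z, Z̃, B be random variables with values in {0, 1} such that: (i) B·Z = B·Z̃ almost surely; (ii) Z and B are conditionally independent given 𝒢; (iii) a version π of E[B | 𝒢] satisfies π > 0 almost surely. Then E[Z] = E[ E[B·Z̃ | 𝒢] / π ]. In words: under consistency, conditional ignorability, and positivity, the counterfactual probability E[Z] = P(T(a) > t) is identified by the g-computation formula, which averages over the covariate distribution the conditional probability of observed survival among subjects with exposure level a. -/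
open MeasureTheory ProbabilityTheory

private lemma stmt4_aux_int {Ω : Type*} [mΩ : MeasurableSpace Ω] (μ : MeasureTheory.Measure Ω)
    [MeasureTheory.IsFiniteMeasure μ] {S : Set Ω} (hS : MeasurableSet S) :
    MeasureTheory.Integrable (S.indicator fun _ => (1 : ℝ)) μ :=
  (MeasureTheory.integrable_const 1).indicator hS

/-- Under consistency (`B·Z = B·Z̃` a.s.), conditional ignorability (`Z ⫫ B | 𝒢`),
and positivity (`π = E[B | 𝒢] > 0` a.s.), the counterfactual probability `E[Z]`
is identified by the g-computation formula `E[Z] = E[ E[B·Z̃ | 𝒢] / π ]`. -/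
theorem stmt_4 {Ω : Type*} (m : MeasurableSpace Ω) {mΩ : MeasurableSpace Ω} [StandardBorelSpace Ω] [Nonempty Ω]
    (μ : Measure Ω) [IsProbabilityMeasure μ]
    (hm : m ≤ mΩ)
    (Z Zt B : Ω → ℝ) (hZ : Measurable Z) (hZt : Measurable Zt) (hB : Measurable B)
    (hZ01 : ∀ ω, Z ω = 0 ∨ Z ω = 1)
    (hZt01 : ∀ ω, Zt ω = 0 ∨ Zt ω = 1)
    (hB01 : ∀ ω, B ω = 0 ∨ B ω = 1)
    (hcons : (fun ω => B ω * Z ω) =ᵐ[μ] fun ω => B ω * Zt ω)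
    (hCI : CondIndepFun m hm Z B μ)
    (π : Ω → ℝ) (hπmeas : StronglyMeasurable[m] π)
    (hπ : π =ᵐ[μ] μ[B | m])
    (hπpos : ∀ᵐ ω ∂μ, 0 < π ω) :
    ∫ ω, Z ω ∂μ = ∫ ω, (μ[fun ω' => B ω' * Zt ω' | m]) ω / π ω ∂μ := by
  set S : Set Ω := Z ⁻¹' {1} with hS_def
  set T : Set Ω := B ⁻¹' {1} with hT_def
  have hZ_eq : Z = S.indicator (fun _ => (1 : ℝ)) := by
    funext ω
    rcases hZ01 ω with h | h <;>
      simp [hS_def, Set.indicator, Set.mem_preimage, h] <;> simp_all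
  have hB_eq : B = T.indicator (fun _ => (1 : ℝ)) := by
    funext ω
    rcases hB01 ω with h | h <;>
      simp [hT_def, Set.indicator, Set.mem_preimage, h] <;> simp_all
  have hBZ_eq : (fun ω => B ω * Z ω) = (S ∩ T).indicator (fun _ => (1 : ℝ)) := by
    funext ω
    rcases hZ01 ω with h | h <;> rcases hB01 ω with h' | h' <;>
      simp [hS_def, hT_def, Set.indicator, Set.mem_preimage, Set.mem_inter_iff, h, h'] <;>
      simp_all
  -- conditional independence factorization
  have hfact := (condIndepFun_iff m hm Z B hZ hB μ).mp hCI S T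
    ⟨{1}, measurableSet_singleton 1, rfl⟩ ⟨{1}, measurableSet_singleton 1, rfl⟩
  -- E[B·Zt|m] = E[B·Z|m] = E[Z|m] * π  a.e.
  have key : μ[fun ω' => B ω' * Zt ω' | m] =ᵐ[μ] fun ω => (μ[Z | m]) ω * π ω := by
    have h1 : μ[fun ω' => B ω' * Zt ω' | m] =ᵐ[μ] μ[fun ω' => B ω' * Z ω' | m] :=
      condExp_congr_ae hcons.symm
    rw [hBZ_eq] at h1
    refine h1.trans (hfact.trans ?_)
    filter_upwards [hπ] with ω hπω
    simp only [Pi.mul_apply, hπω, hZ_eq, hB_eq]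
  have hSmeas : MeasurableSet[mΩ] S := hZ (measurableSet_singleton 1)
  have hZint : Integrable Z μ := by
    rw [hZ_eq]
    exact stmt4_aux_int (mΩ := mΩ) μ hSmeas
  calc ∫ ω, Z ω ∂μ = ∫ ω, (μ[Z | m]) ω ∂μ := (integral_condExp hm).symm
    _ = ∫ ω, (μ[fun ω' => B ω' * Zt ω' | m]) ω / π ω ∂μ := by
        refine integral_congr_ae ?_
        filter_upwards [key, hπpos] with ω hk hp
        rw [hk, mul_div_cancel_right₀ _ hp.ne']
end

section
/- Let μ be a probability measure on ℝ and let g : ℝ → ℝ be nondecreasing, μ-integrable, with ∫ g dμ = 0. For c ∈ ℝ define h_c(a) = −1 if a ≤ c and h_c(a) = +1 if a > c. Then sup_{c ∈ ℝ} |∫ g·h_c dμ| = ∫ |g| dμ. In words: for a monotone mean-zero effect function, the supremum of the linear contrasts over the one-parameter class of sign-step functions equals the probability-weighted ℓ₁ norm of the effect function. -/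
open MeasureTheory Filter Topology

/-- For a nondecreasing, μ-integrable, mean-zero effect function `g`, the
supremum over `c ∈ ℝ` of the linear contrasts `|∫ g·h_c dμ|`, where
`h_c(a) = −1` if `a ≤ c` and `+1` if `a > c`, equals the μ-weighted ℓ₁ norm
`∫ |g| dμ`. -/
theorem stmt_11 (μ : Measure ℝ) [IsProbabilityMeasure μ]
    (g : ℝ → ℝ) (hmono : Monotone g) (hint : Integrable g μ)
    (hmean : ∫ a, g a ∂μ = 0) :
    (⨆ c : ℝ, |∫ a, g a * (if a ≤ c then (-1 : ℝ) else 1) ∂μ|)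
      = ∫ a, |g a| ∂μ := by
  have hgm : Measurable g := hmono.measurable
  have hhm : ∀ c : ℝ, Measurable fun a : ℝ => (if a ≤ c then (-1:ℝ) else 1) := fun c =>
    Measurable.ite (measurableSet_le measurable_id measurable_const) measurable_const
      measurable_const
  have habs : ∀ (c a : ℝ), |g a * (if a ≤ c then (-1:ℝ) else 1)| = |g a| := by
    intro c a
    rcases le_or_gt a c with h | h
    · simp [h, abs_mul]
    · simp [not_le.mpr h]
  have hintc : ∀ c : ℝ, Integrable (fun a => g a * (if a ≤ c then (-1:ℝ) else 1)) μ := by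
    intro c
    refine hint.mono ((hgm.mul (hhm c)).aestronglyMeasurable) ?_
    filter_upwards with a
    simp only [Real.norm_eq_abs, habs c a, le_refl]
  have hub : ∀ c : ℝ, |∫ a, g a * (if a ≤ c then (-1:ℝ) else 1) ∂μ| ≤ ∫ a, |g a| ∂μ := by
    intro c
    calc |∫ a, g a * (if a ≤ c then (-1:ℝ) else 1) ∂μ|
        ≤ ∫ a, |g a * (if a ≤ c then (-1:ℝ) else 1)| ∂μ := by
          simpa [Real.norm_eq_abs] using
            norm_integral_le_integral_norm (μ := μ)
              (fun a => g a * (if a ≤ c then (-1:ℝ) else 1))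
      _ = ∫ a, |g a| ∂μ := by simp_rw [habs]
  have hbdd : BddAbove (Set.range fun c : ℝ =>
      |∫ a, g a * (if a ≤ c then (-1:ℝ) else 1) ∂μ|) :=
    ⟨∫ a, |g a| ∂μ, by rintro x ⟨c, rfl⟩; exact hub c⟩
  obtain ⟨cs, hcs⟩ : ∃ cs : ℕ → ℝ, ∀ a : ℝ,
      (g a < 0 → ∀ᶠ n in atTop, a ≤ cs n) ∧ (0 < g a → ∀ᶠ n in atTop, cs n < a) := by
    by_cases hS : {a : ℝ | g a < 0}.Nonempty
    · by_cases hB : BddAbove {a : ℝ | g a < 0}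
      · set c₀ := sSup {a : ℝ | g a < 0} with hc₀
        by_cases hg0 : g c₀ ≤ 0
        · refine ⟨fun _ => c₀, fun a => ⟨fun ha => ?_, fun ha => ?_⟩⟩
          · exact Filter.Eventually.of_forall fun n => le_csSup hB ha
          · refine Filter.Eventually.of_forall fun n => ?_
            by_contra hle
            push_neg at hle
            exact absurd (le_trans (hmono hle) hg0) (not_le.mpr ha)
        · push_neg at hg0
          refine ⟨fun n : ℕ => c₀ - 1/(n+1), fun a => ⟨fun ha => ?_, fun ha => ?_⟩⟩
          · have hlt : a < c₀ := lt_of_le_of_ne (le_csSup hB ha)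
              (by rintro rfl; exact absurd hg0 (not_lt.mpr ha.le))
            have htend : Tendsto (fun n : ℕ => c₀ - 1/(n+1)) atTop (𝓝 (c₀ - 0)) :=
              tendsto_const_nhds.sub tendsto_one_div_add_atTop_nhds_zero_nat
            rw [sub_zero] at htend
            exact htend.eventually (eventually_ge_nhds hlt)
          · have hca : c₀ ≤ a := by
              by_contra hlt; push_neg at hlt
              obtain ⟨s, hs, has⟩ := exists_lt_of_lt_csSup hS hlt
              exact absurd (hmono has.le) (not_le.mpr (lt_trans hs ha))
            refine Filter.Eventually.of_forall fun n => ?_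
            have h1 : (0:ℝ) < 1/(n+1) := by positivity
            linarith
      · refine ⟨fun n : ℕ => (n : ℝ), fun a => ⟨fun ha => ?_, fun ha => ?_⟩⟩
        · obtain ⟨n, hn⟩ := exists_nat_ge a
          exact Filter.eventually_atTop.mpr ⟨n, fun m hm => hn.trans (Nat.cast_le.mpr hm)⟩
        · exfalso
          apply hB
          refine ⟨a, fun s hs => ?_⟩
          by_contra h'
          push_neg at h'
          exact absurd (hmono h'.le) (not_le.mpr (lt_trans hs ha))
    · rw [Set.not_nonempty_iff_eq_empty] at hS
      have hge : ∀ a, ¬ g a < 0 := fun a ha => by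
        have : a ∈ {a : ℝ | g a < 0} := ha
        simp [hS] at this
      refine ⟨fun n : ℕ => -(n : ℝ), fun a => ⟨fun ha => absurd ha (hge a), fun ha => ?_⟩⟩
      obtain ⟨n, hn⟩ := exists_nat_gt (-a)
      refine Filter.eventually_atTop.mpr ⟨n, fun m hm => ?_⟩
      have : (n : ℝ) ≤ m := by exact_mod_cast hm
      show -(m:ℝ) < a
      linarith
  have hptw : ∀ a : ℝ,
      Tendsto (fun n => g a * (if a ≤ cs n then (-1:ℝ) else 1)) atTop (𝓝 |g a|) := by
    intro a
    rcases lt_trichotomy (g a) 0 with h | h | h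
    · refine tendsto_const_nhds.congr' ?_
      filter_upwards [(hcs a).1 h] with n hn
      rw [if_pos hn, abs_of_neg h]; ring
    · simpa [h] using (tendsto_const_nhds :
        Tendsto (fun _ : ℕ => (0:ℝ)) atTop (𝓝 0))
    · refine tendsto_const_nhds.congr' ?_
      filter_upwards [(hcs a).2 h] with n hn
      rw [if_neg (not_le.mpr hn), abs_of_pos h]; ring
  have hlim : Tendsto (fun n => ∫ a, g a * (if a ≤ cs n then (-1:ℝ) else 1) ∂μ) atTop
      (𝓝 (∫ a, |g a| ∂μ)) := by
    refine tendsto_integral_of_dominated_convergence (fun a => |g a|)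
      (fun n => (hintc (cs n)).1) hint.abs ?_ ?_
    · intro n; filter_upwards with a; rw [Real.norm_eq_abs, habs]
    · filter_upwards with a using hptw a
  refine le_antisymm (ciSup_le hub) (le_of_tendsto hlim ?_)
  filter_upwards with n
  exact (le_abs_self _).trans (le_ciSup hbdd (cs n))
end
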